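/- In the two-agent opposed-preferences economy with classification π = {C₁,…,C_k} (intervals listed from left to right), let ⟨p,(x,y)⟩ be a competitive equilibrium and let j* be an index such that x_{C_i} = λ(C_i) for all i < j* and x_{C_j} = 0 for all j > j*, with y_{C_j} = λ(C_j) − x_{C_j} for all j. Write C* = C_{j*}, C_ℓ = ∪_{i<j*} C_i, and C_r = ∪_{j>j*} C_j. If x_{C*} > 0 and y_{C*} > 0, then x_{C*} = ξ·λ(C*), where ξ = (1/2)·[ ν₂(C_r)/ν₂(C*) − ν₁(C_ℓ)/ν₁(C*) + 1 ]. -/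

import Mathlib

open MeasureTheory Set
open scoped ENNReal

noncomputable section

/-- A classification `π = {C₁,…,C_k}` of `[0,1]` into intervals of positive Lebesgue
measure, listed from left to right. -/
structure OrderedClassification (k : ℕ) where
  F : Fin k → Set ℝ
  isInterval : ∀ j, (F j).OrdConnected
  posMeas : ∀ j, 0 < volume (F j)
  ordered : ∀ j j' : Fin k, j < j' → ∀ s ∈ F j, ∀ t ∈ F j', s < t
  cover : ⋃ j, F j = Set.Icc (0 : ℝ) 1

/-- Lebesgue measure of a commodity, as a real number. -/
def lvol (C : Set ℝ) : ℝ := (volume C).toReal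

/-- The evaluation measure induced by a density: `ν(C) = ∫_C f dλ`. -/
def nu (f : ℝ → ℝ) (C : Set ℝ) : ℝ := ∫ t in C, f t

/-- Linear utility of a tradable bundle for an agent with density `f`:
`V(π,x) = ∑_j (x_j/λ(C_j)) ν(C_j)`. -/
def Vlin {k : ℕ} (P : OrderedClassification k) (f : ℝ → ℝ) (x : Fin k → ℝ) : ℝ :=
  ∑ j, (x j / lvol (P.F j)) * nu f (P.F j)

/-- Competitive equilibrium of the two-agent opposed-preferences economy `E(π)`:
both agents have claim `1/2`; `x` is agent 1's bundle and `y` agent 2's. -/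
def IsEqm2 {k : ℕ} (P : OrderedClassification k) (f₁ f₂ : ℝ → ℝ)
    (p x y : Fin k → ℝ) : Prop :=
  (∀ j, 0 ≤ p j) ∧ (∀ j, 0 ≤ x j) ∧ (∀ j, 0 ≤ y j) ∧
  (∀ j, x j + y j ≤ lvol (P.F j)) ∧
  (∑ j, p j * x j ≤ (1/2) * ∑ j, p j * lvol (P.F j)) ∧
  (∑ j, p j * y j ≤ (1/2) * ∑ j, p j * lvol (P.F j)) ∧
  (∀ z : Fin k → ℝ, (∀ j, 0 ≤ z j) → Vlin P f₁ x < Vlin P f₁ z →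
    (1/2) * ∑ j, p j * lvol (P.F j) < ∑ j, p j * z j) ∧
  (∀ z : Fin k → ℝ, (∀ j, 0 ≤ z j) → Vlin P f₂ y < Vlin P f₂ z →
    (1/2) * ∑ j, p j * lvol (P.F j) < ∑ j, p j * z j)

/-- Opposed preferences: `f₁` is strictly decreasing and `f₂` strictly increasing on
`[0,1]`, both strictly positive. -/
def OpposedPreferences (f₁ f₂ : ℝ → ℝ) : Prop :=
  StrictAntiOn f₁ (Set.Icc 0 1) ∧ StrictMonoOn f₂ (Set.Icc 0 1) ∧
    (∀ t ∈ Set.Icc (0:ℝ) 1, 0 < f₁ t) ∧ (∀ t ∈ Set.Icc (0:ℝ) 1, 0 < f₂ t)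

/-!
At an equilibrium each agent maximizes a linear utility `w ↦ w ⬝ᵥ a` on its budget set, where
`a_j = ν(C_j)/λ(C_j)`. Hence every good has a positive price (agent 2 values all of them), and two
goods held by the same agent have prices proportional to `a`: moving expenditure from one to the
other would otherwise pay. So the cells of `C_ℓ`, all held by agent 1, are worth
`p*λ(C*)·ν₁(C_ℓ)/ν₁(C*)` in total, and those of `C_r`, held by agent 2, are worth
`p*λ(C*)·ν₂(C_r)/ν₂(C*)`, where `p*` is the price of `C*`. Since agent 2 holds the complement of
agent 1's bundle, agent 1's budget constraint binds:
`2 (value(C_ℓ) + p* x*) = value(C_ℓ) + p* λ(C*) + value(C_r)`, which is solved for `x*`.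
-/

section LinearDemand

variable {ι : Type*} [Fintype ι] [DecidableEq ι]

def IsLinearDemand (a p : ι → ℝ) (B : ℝ) (z : ι → ℝ) : Prop :=
  (∀ j, 0 ≤ z j) ∧ p ⬝ᵥ z ≤ B ∧ ∀ w, (∀ j, 0 ≤ w j) → z ⬝ᵥ a < w ⬝ᵥ a → B < p ⬝ᵥ w

namespace IsLinearDemand

variable {a p z : ι → ℝ} {B : ℝ}

theorem price_pos (h : IsLinearDemand a p B z) {j : ι} (ha : 0 < a j) : 0 < p j := by
  obtain ⟨hz, hbudget, hopt⟩ := h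
  by_contra! hp
  set w : ι → ℝ := z + Pi.single j 1
  have hw : ∀ i, 0 ≤ w i := fun i => by
    rcases eq_or_ne i j with rfl | hi
    · simp only [w, Pi.add_apply, Pi.single_eq_same]
      linarith [hz i]
    · simp [w, hi, hz i]
  have hgain : z ⬝ᵥ a < w ⬝ᵥ a := by
    simp only [w, add_dotProduct, single_dotProduct]
    linarith
  have hcost : p ⬝ᵥ w ≤ p ⬝ᵥ z := by
    simp only [w, dotProduct_add, dotProduct_single]
    linarith
  linarith [hopt w hw hgain]

/-- Selling all of good `m` and spending the proceeds on good `j` cannot be profitable. -/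
theorem mul_price_le (h : IsLinearDemand a p B z) {m j : ι} (hm : 0 < z m) (hpm : 0 ≤ p m)
    (hj : 0 < p j) :
    a j * p m ≤ a m * p j := by
  obtain ⟨hz, hbudget, hopt⟩ := h
  by_contra! hlt
  set ε := z m * p m / p j
  have hε : 0 ≤ ε := by have := hz m; positivity
  set w := z + Pi.single m (-z m) + Pi.single j ε
  have hw : ∀ i, 0 ≤ w i := fun i => by
    simp only [w, Pi.add_apply, Pi.single_apply]
    split_ifs with him hij hij <;> subst_vars <;> linarith [hz i]
  have hgain : z ⬝ᵥ a < w ⬝ᵥ a := by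
    have : z m * a m < ε * a j := by
      rw [div_mul_eq_mul_div, lt_div_iff₀ hj]
      nlinarith
    simp only [w, add_dotProduct, single_dotProduct]
    linarith
  have hcost : p ⬝ᵥ w = p ⬝ᵥ z := by
    simp only [w, dotProduct_add, dotProduct_single, ε]
    field_simp
    ring
  linarith [hopt w hw hgain]

theorem mul_price_eq (h : IsLinearDemand a p B z) {i j : ι} (hi : 0 < z i) (hj : 0 < z j)
    (hpi : 0 < p i) (hpj : 0 < p j) : a i * p j = a j * p i :=
  le_antisymm (h.mul_price_le hj hpj.le hpi) (h.mul_price_le hi hpi.le hpj)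

end IsLinearDemand

end LinearDemand

theorem Fintype.sum_eq_sum_lt_add_add_sum_gt {α M : Type*} [Fintype α] [LinearOrder α]
    [AddCommMonoid M] (a : α) (f : α → M) :
    ∑ m, f m = ∑ m with m < a, f m + f a + ∑ m with a < m, f m := by
  classical
  have hsplit : ∀ m, f m = ((if m < a then f m else 0) + if m = a then f m else 0) +
      if a < m then f m else 0 := fun m => by
    rcases lt_trichotomy m a with h | rfl | h
    · simp [h, h.ne, h.not_gt]
    · simp
    · simp [h, h.ne', h.not_gt]
  rw [Finset.sum_congr rfl fun m _ => hsplit m, Finset.sum_add_distrib, Finset.sum_add_distrib,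
    Finset.sum_ite_eq', Finset.sum_filter, Finset.sum_filter, if_pos (Finset.mem_univ a)]

namespace OrderedClassification

variable {k : ℕ} (P : OrderedClassification k) {f : ℝ → ℝ}

def avgDensity (f : ℝ → ℝ) (j : Fin k) : ℝ := nu f (P.F j) / lvol (P.F j)

theorem vlin_eq_dotProduct (x : Fin k → ℝ) : Vlin P f x = x ⬝ᵥ P.avgDensity f :=
  Finset.sum_congr rfl fun j _ => by rw [avgDensity, mul_div_assoc']; ring

theorem subset_Icc (j : Fin k) : P.F j ⊆ Icc 0 1 :=
  P.cover ▸ Set.subset_iUnion P.F j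

theorem measurableSet (j : Fin k) : MeasurableSet (P.F j) :=
  (P.isInterval j).measurableSet

theorem pairwise_disjoint : Pairwise (Function.onFun Disjoint P.F) := by
  intro i j hij
  wlog hlt : i < j generalizing i j
  · exact (this hij.symm ((Ne.le_iff_lt hij.symm).mp (not_lt.mp hlt))).symm
  exact Set.disjoint_left.2 fun t hi hj => lt_irrefl t (P.ordered i j hlt t hi t hj)

theorem lvol_pos (j : Fin k) : 0 < lvol (P.F j) :=
  ENNReal.toReal_pos (P.posMeas j).ne' <| ne_top_of_le_ne_top
    (by simp [Real.volume_Icc]) (measure_mono (P.subset_Icc j))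

theorem nu_pos (hf : IntegrableOn f (Icc 0 1)) (hpos : ∀ t ∈ Icc (0 : ℝ) 1, 0 < f t)
    (j : Fin k) : 0 < nu f (P.F j) := by
  have hsub := P.subset_Icc j
  rw [nu, setIntegral_pos_iff_support_of_nonneg_ae _ (hf.mono_set hsub)]
  · exact (P.posMeas j).trans_le <| measure_mono fun t ht => ⟨(hpos t (hsub ht)).ne', ht⟩
  · exact (ae_restrict_iff' (P.measurableSet j)).2 <|
      Filter.Eventually.of_forall fun t ht => (hpos t (hsub ht)).le

theorem avgDensity_pos (hf : IntegrableOn f (Icc 0 1))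
    (hpos : ∀ t ∈ Icc (0 : ℝ) 1, 0 < f t) (j : Fin k) : 0 < P.avgDensity f j :=
  div_pos (P.nu_pos hf hpos j) (P.lvol_pos j)

theorem nu_iUnion (hf : IntegrableOn f (Icc 0 1)) (q : Fin k → Prop) [DecidablePred q] :
    nu f (⋃ j, ⋃ (_ : q j), P.F j) = ∑ j with q j, nu f (P.F j) := by
  have hset : ⋃ j, ⋃ (_ : q j), P.F j = ⋃ j ∈ Finset.univ.filter q, P.F j := by ext; simp
  rw [nu, hset, integral_biUnion_finset _ (fun j _ => P.measurableSet j)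
    (fun i _ j _ hij => P.pairwise_disjoint hij) (fun j _ => hf.mono_set (P.subset_Icc j))]
  rfl

theorem price_mul_lvol_eq {p : Fin k → ℝ} {i m : Fin k} (hm : 0 < nu f (P.F m))
    (h : P.avgDensity f i * p m = P.avgDensity f m * p i) :
    p i * lvol (P.F i) = p m * lvol (P.F m) / nu f (P.F m) * nu f (P.F i) := by
  have hli := (P.lvol_pos i).ne'
  have hlm := (P.lvol_pos m).ne'
  unfold avgDensity at h
  field_simp at h ⊢
  linear_combination -h

theorem sum_price_mul_lvol_eq (hf : IntegrableOn f (Icc 0 1)) (hpos : ∀ t ∈ Icc (0 : ℝ) 1, 0 < f t)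
    {p z : Fin k → ℝ} {B : ℝ} (hd : IsLinearDemand (P.avgDensity f) p B z) (hp : ∀ j, 0 < p j)
    (q : Fin k → Prop) [DecidablePred q] {m : Fin k} (hm : 0 < z m) (hq : ∀ j, q j → 0 < z j) :
    ∑ j with q j, p j * lvol (P.F j) =
      p m * lvol (P.F m) / nu f (P.F m) * nu f (⋃ j, ⋃ (_ : q j), P.F j) := by
  rw [P.nu_iUnion hf, Finset.mul_sum]
  exact Finset.sum_congr rfl fun j hj => P.price_mul_lvol_eq (P.nu_pos hf hpos m)
    (hd.mul_price_eq (hq j (Finset.mem_filter.1 hj).2) hm (hp j) (hp m))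

end OrderedClassification

namespace IsEqm2

variable {k : ℕ} {P : OrderedClassification k} {f₁ f₂ : ℝ → ℝ} {p x y : Fin k → ℝ}

theorem isLinearDemand_left (h : IsEqm2 P f₁ f₂ p x y) :
    IsLinearDemand (P.avgDensity f₁) p ((1/2) * ∑ j, p j * lvol (P.F j)) x := by
  obtain ⟨-, hx, -, -, hbx, -, hopt, -⟩ := h
  simp only [OrderedClassification.vlin_eq_dotProduct] at hopt
  exact ⟨hx, hbx, hopt⟩

theorem isLinearDemand_right (h : IsEqm2 P f₁ f₂ p x y) :
    IsLinearDemand (P.avgDensity f₂) p ((1/2) * ∑ j, p j * lvol (P.F j)) y := by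
  obtain ⟨-, -, hy, -, -, hby, -, hopt⟩ := h
  simp only [OrderedClassification.vlin_eq_dotProduct] at hopt
  exact ⟨hy, hby, hopt⟩

theorem two_mul_budget_eq (h : IsEqm2 P f₁ f₂ p x y) (hy : ∀ j, y j = lvol (P.F j) - x j) :
    2 * ∑ j, p j * x j = ∑ j, p j * lvol (P.F j) := by
  obtain ⟨-, -, -, -, hbx, hby, -, -⟩ := h
  simp only [hy, mul_sub, Finset.sum_sub_distrib] at hby
  linarith

end IsEqm2

/-- the share of the disputed commodity.  If in equilibrium agent 1 gets
all commodities left of `j*` and none right of `j*`, and both agents consume a positive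
amount of the disputed commodity `C* = C_{j*}`, then
`x_{C*} = ξ·λ(C*)` with `ξ = (1/2)(ν₂(C_r)/ν₂(C*) − ν₁(C_ℓ)/ν₁(C*) + 1)`. -/
theorem disputed_commodity_share (k : ℕ) (P : OrderedClassification k)
    (f₁ f₂ : ℝ → ℝ) (hopp : OpposedPreferences f₁ f₂)
    (p x y : Fin k → ℝ) (heq : IsEqm2 P f₁ f₂ p x y)
    (jstar : Fin k)
    (hleft : ∀ i, i < jstar → x i = lvol (P.F i))
    (hright : ∀ j, jstar < j → x j = 0)
    (hy : ∀ j, y j = lvol (P.F j) - x j)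
    (hx : 0 < x jstar) (hy' : 0 < y jstar) :
    x jstar =
      (1/2) * (nu f₂ (⋃ j : Fin k, ⋃ (_ : jstar < j), P.F j) / nu f₂ (P.F jstar) -
        nu f₁ (⋃ i : Fin k, ⋃ (_ : i < jstar), P.F i) / nu f₁ (P.F jstar) + 1) *
        lvol (P.F jstar) := by
  obtain ⟨hf₁, hf₂, hf₁pos, hf₂pos⟩ := hopp
  have hi₁ : IntegrableOn f₁ (Icc 0 1) := hf₁.antitoneOn.integrableOn_isCompact isCompact_Icc
  have hi₂ : IntegrableOn f₂ (Icc 0 1) := hf₂.monotoneOn.integrableOn_isCompact isCompact_Icc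
  have hd₁ := heq.isLinearDemand_left
  have hd₂ := heq.isLinearDemand_right
  have hp : ∀ j, 0 < p j := fun j => hd₂.price_pos (P.avgDensity_pos hi₂ hf₂pos j)
  have hL := P.sum_price_mul_lvol_eq hi₁ hf₁pos hd₁ hp (· < jstar) hx fun i hi => by
    rw [hleft i hi]
    exact P.lvol_pos i
  have hR := P.sum_price_mul_lvol_eq hi₂ hf₂pos hd₂ hp (jstar < ·) hy' fun j hj => by
    rw [hy j, hright j hj, sub_zero]
    exact P.lvol_pos j
  have hbind := heq.two_mul_budget_eq hy
  have hxsum : ∑ j, p j * x j = ∑ i with i < jstar, p i * lvol (P.F i) + p jstar * x jstar := by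
    have hxl : ∑ i with i < jstar, p i * x i = ∑ i with i < jstar, p i * lvol (P.F i) :=
      Finset.sum_congr rfl fun i hi => by rw [hleft i (Finset.mem_filter.1 hi).2]
    have hxr : ∑ j with jstar < j, p j * x j = 0 :=
      Finset.sum_eq_zero fun j hj => by rw [hright j (Finset.mem_filter.1 hj).2, mul_zero]
    rw [Fintype.sum_eq_sum_lt_add_add_sum_gt jstar, hxl, hxr, add_zero]
  rw [hxsum, Fintype.sum_eq_sum_lt_add_add_sum_gt jstar, hL, hR] at hbind
  refine mul_left_cancel₀ (hp jstar).ne' ?_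
  linear_combination (1/2 : ℝ) * hbind

end
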